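/- arXiv:1106.5189 — 2 statements merged into one kernel-verified Lean document; each statement's English description precedes it below -/
import Mathlib

section
/- Cocycle identity: Let 𝔤 be a nonassociative algebra over a field of characteristic zero, K its K-operator, and τ: T(𝔤) → End(T(𝔤)) the algebra homomorphism with τ(x) = τ_x. Then for all A, B ∈ T(𝔤): K(A) ⊗ K(B) = Σ_{(A)} K( A_{(1)} ⊗ τ(K(A_{(2)})) B ), where Δ(A) = Σ_{(A)} A_{(1)} ⊗ A_{(2)} is the standard comultiplication of T(𝔤). -/
/-!
Both sides of the identity, as linear functions `Φ` of `A`, agree at `A = 1` and satisfy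
the recursion defining `K`: `Φ (x ⊗ a + τ_x a) = x ⊗ Φ a`. Since `τ_x` preserves tensor degree,
a linear map satisfying this recursion is determined by its value at `1`. For the right-hand side
the recursion holds because a derivation `τ_x` mapping `𝔤` into `𝔤` is also a coderivation,
`Δ ∘ τ_x = (τ_x ⊗ 1 + 1 ⊗ τ_x) ∘ Δ`, whence
`Δ (x ⊗ a + τ_x a) = Δ x · Δ a + (τ_x ⊗ 1 + 1 ⊗ τ_x) (Δ a)`.
-/

open TensorProduct

/-- The standard comultiplication of the tensor algebra. -/
noncomputable def tensorAlgebraComul (k : Type*) [Field k] (V : Type*) [AddCommGroup V]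
    [Module k V] :
    TensorAlgebra k V →ₐ[k] TensorAlgebra k V ⊗[k] TensorAlgebra k V :=
  TensorAlgebra.lift k
    ((TensorProduct.mk k (TensorAlgebra k V) (TensorAlgebra k V) 1).comp (TensorAlgebra.ι k)
      + ((TensorProduct.mk k (TensorAlgebra k V) (TensorAlgebra k V)).flip 1).comp
          (TensorAlgebra.ι k))

section Leibniz

variable {R A B : Type*} [CommRing R] [Ring A] [Ring B] [Algebra R A] [Algebra R B]

theorem map_one_eq_zero_of_leibniz {f : A →ₗ[R] A}
    (hf : ∀ a b, f (a * b) = f a * b + a * f b) : f 1 = 0 := by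
  simpa using hf 1 1

theorem map_mem_pow_of_leibniz {f : A →ₗ[R] A} (hf : ∀ a b, f (a * b) = f a * b + a * f b)
    {M : Submodule R A} (hM : ∀ m ∈ M, f m ∈ M) {n : ℕ} {a : A} (ha : a ∈ M ^ n) :
    f a ∈ M ^ n := by
  induction ha using Submodule.pow_induction_on_left' with
  | algebraMap r => simp [Algebra.algebraMap_eq_smul_one, map_one_eq_zero_of_leibniz hf]
  | add x y i _ _ hx hy => simpa only [map_add] using add_mem hx hy
  | mem_mul m hm i x hx ih =>
    rw [hf, Nat.succ_eq_add_one, pow_succ']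
    exact add_mem (Submodule.mul_mem_mul (hM m hm) hx) (Submodule.mul_mem_mul hm ih)

theorem leibniz_rTensor_add_lTensor {f : A →ₗ[R] A} {g : B →ₗ[R] B}
    (hf : ∀ a b, f (a * b) = f a * b + a * f b) (hg : ∀ a b, g (a * b) = g a * b + a * g b)
    (u v : A ⊗[R] B) :
    (f.rTensor B + g.lTensor A) (u * v) =
      (f.rTensor B + g.lTensor A) u * v + u * (f.rTensor B + g.lTensor A) v := by
  induction u using TensorProduct.induction_on with
  | zero => simp
  | add u₁ u₂ h₁ h₂ => simp only [add_mul, map_add, h₁, h₂]; abel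
  | tmul a b =>
    induction v using TensorProduct.induction_on with
    | zero => simp
    | add v₁ v₂ h₁ h₂ => simp only [mul_add, map_add, h₁, h₂]; abel
    | tmul c e =>
      simp only [Algebra.TensorProduct.tmul_mul_tmul, LinearMap.add_apply,
        LinearMap.rTensor_tmul, LinearMap.lTensor_tmul, hf, hg, add_tmul, tmul_add, add_mul,
        mul_add]
      abel

end Leibniz

namespace TensorAlgebra

variable {k g : Type*} [CommRing k] [AddCommGroup g] [Module k g]

theorem linearMap_ext_of_ι_mul_add {f : g → Module.End k (TensorAlgebra k g)}
    (hf : ∀ x n, ∀ a ∈ LinearMap.range (ι k) ^ n, f x a ∈ LinearMap.range (ι k) ^ n)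
    {Φ Ψ : TensorAlgebra k g →ₗ[k] TensorAlgebra k g}
    (hΦ : ∀ x a, Φ (ι k x * a + f x a) = ι k x * Φ a)
    (hΨ : ∀ x a, Ψ (ι k x * a + f x a) = ι k x * Ψ a) (h1 : Φ 1 = Ψ 1) : Φ = Ψ := by
  set D := Φ - Ψ
  have hD : ∀ x a, D (ι k x * a) = ι k x * D a - D (f x a) := fun x a =>
    eq_sub_of_add_eq <| by
      rw [← map_add]
      simp only [D, LinearMap.sub_apply, hΦ, hΨ, mul_sub]
  have hD_pow : ∀ n, LinearMap.range (ι k (M := g)) ^ n ≤ LinearMap.ker D := by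
    intro n
    induction n with
    | zero =>
      rintro _ ⟨r, rfl⟩
      simp [D, h1]
    | succ n ih =>
      intro a ha
      rw [pow_succ'] at ha
      refine Submodule.mul_induction_on ha ?_ fun a b ha hb => add_mem ha hb
      rintro _ ⟨x, rfl⟩ b hb
      rw [LinearMap.mem_ker, hD, ih hb, ih (hf x n b hb), mul_zero, sub_zero]
  have hker := iSup_le hD_pow
  rwa [(DirectSum.Decomposition.isInternal _).submodule_iSup_eq_top, top_le_iff,
    LinearMap.ker_eq_top, sub_eq_zero] at hker

end TensorAlgebra

section Comultiplication

open TensorAlgebra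

variable {k g : Type*} [Field k] [AddCommGroup g] [Module k g]

local notation "T" => TensorAlgebra k g

theorem tensorAlgebraComul_ι (x : g) :
    tensorAlgebraComul k g (ι k x) = 1 ⊗ₜ ι k x + ι k x ⊗ₜ 1 := by
  simp [tensorAlgebraComul]

theorem tensorAlgebraComul_map_of_leibniz {f : Module.End k T}
    (hf : ∀ a b, f (a * b) = f a * b + a * f b)
    (hfι : ∀ y, f (ι k y) ∈ LinearMap.range (ι k)) (a : T) :
    tensorAlgebraComul k g (f a) = (f.rTensor T + f.lTensor T) (tensorAlgebraComul k g a) := by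
  induction a using TensorAlgebra.induction with
  | algebraMap r =>
    simp [Algebra.algebraMap_eq_smul_one, map_one_eq_zero_of_leibniz hf,
      map_one_eq_zero_of_leibniz (leibniz_rTensor_add_lTensor hf hf)]
  | ι y =>
    obtain ⟨z, hz⟩ := hfι y
    rw [← hz, tensorAlgebraComul_ι, tensorAlgebraComul_ι, hz]
    simp [map_one_eq_zero_of_leibniz hf, add_comm]
  | mul a b ha hb =>
    rw [hf, map_add, map_mul, map_mul, ha, hb, map_mul, leibniz_rTensor_add_lTensor hf hf]
  | add a b ha hb => rw [map_add, map_add, ha, hb, map_add, map_add]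

variable {τ : TensorAlgebra k g →ₐ[k] Module.End k (TensorAlgebra k g)}
  {K : TensorAlgebra k g →ₗ[k] TensorAlgebra k g} {B : TensorAlgebra k g}
  {L : TensorAlgebra k g ⊗[k] TensorAlgebra k g →ₗ[k] TensorAlgebra k g}

theorem pairing_primitive_mul_add
    (hτder : ∀ (x : g) (a b : T), τ (ι k x) (a * b) = τ (ι k x) a * b + a * τ (ι k x) b)
    (hK : ∀ (x : g) (a : T), K (ι k x * a + τ (ι k x) a) = ι k x * K a)
    (hL : ∀ c e : T, L (c ⊗ₜ e) = c * τ (K e) B) (x : g) (u : T ⊗[k] T) :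
    L ((1 ⊗ₜ ι k x + ι k x ⊗ₜ 1) * u +
        ((τ (ι k x)).rTensor T + (τ (ι k x)).lTensor T) u) =
      ι k x * L u + τ (ι k x) (L u) := by
  induction u using TensorProduct.induction_on with
  | zero => simp
  | add u₁ u₂ h₁ h₂ =>
    rw [mul_add, map_add _ u₁ u₂, add_add_add_comm, map_add L, h₁, h₂]
    simp only [map_add, mul_add]
    abel
  | tmul c e =>
    have hKe : τ (K (ι k x * e)) B + τ (K (τ (ι k x) e)) B = τ (ι k x) (τ (K e) B) := by
      rw [← LinearMap.add_apply, ← map_add, ← map_add, hK, map_mul, Module.End.mul_apply]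
    simp only [add_mul, Algebra.TensorProduct.tmul_mul_tmul, one_mul, map_add,
      LinearMap.add_apply, LinearMap.rTensor_tmul, LinearMap.lTensor_tmul, hL, hτder]
    rw [← hKe, mul_add, mul_assoc]
    abel

end Comultiplication

/-- Cocycle identity (identity (5) of the paper): with `τ : T(𝔤) → End(T(𝔤))` the algebra
homomorphism extending `x ↦ τ_x` and `K` the K-operator of the nonassociative algebra `𝔤`,
for all `A, B ∈ T(𝔤)`:
`K(A) ⊗ K(B) = Σ_{(A)} K( A₍₁₎ ⊗ τ(K(A₍₂₎)) B )`, where the right-hand side is expressed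
by applying `K` after the bilinear map `(c, e) ↦ c * τ(K(e)) B` to `Δ(A)`. -/
theorem kOperator_cocycle_identity
    (k : Type*) [Field k] (g : Type*) [AddCommGroup g] [Module k g]
    (d : g →ₗ[k] g →ₗ[k] g)
    (τ : TensorAlgebra k g →ₐ[k] Module.End k (TensorAlgebra k g))
    (hτder : ∀ (x : g) (a b : TensorAlgebra k g),
      τ (TensorAlgebra.ι k x) (a * b) =
        τ (TensorAlgebra.ι k x) a * b + a * τ (TensorAlgebra.ι k x) b)
    (hτι : ∀ x y : g,
      τ (TensorAlgebra.ι k x) (TensorAlgebra.ι k y) = TensorAlgebra.ι k (d x y))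
    (K : TensorAlgebra k g →ₗ[k] TensorAlgebra k g)
    (hK1 : K 1 = 1)
    (hK : ∀ (x : g) (a : TensorAlgebra k g),
      K (TensorAlgebra.ι k x * a + τ (TensorAlgebra.ι k x) a) =
        TensorAlgebra.ι k x * K a)
    (A B : TensorAlgebra k g) :
    K A * K B =
      K ((TensorProduct.lift
            (LinearMap.mk₂ k (fun c e => c * τ (K e) B)
              (fun c c' e => by simp [add_mul])
              (fun s c e => by simp [smul_mul_assoc])
              (fun c e e' => by simp [map_add, mul_add])
              (fun s c e => by simp [map_smul, mul_smul_comm])))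
          (tensorAlgebraComul k g A)) := by
  suffices key : ∀ L : TensorAlgebra k g ⊗[k] TensorAlgebra k g →ₗ[k] TensorAlgebra k g,
      (∀ c e, L (c ⊗ₜ e) = c * τ (K e) B) →
        K A * K B = K (L (tensorAlgebraComul k g A)) from
    key _ fun c e => by simp
  intro L hL
  have hτι_mem (x y : g) : τ (TensorAlgebra.ι k x) (TensorAlgebra.ι k y) ∈
      LinearMap.range (TensorAlgebra.ι k) := ⟨d x y, (hτι x y).symm⟩
  have hΨ (x : g) (a : TensorAlgebra k g) :
      K (L (tensorAlgebraComul k g (TensorAlgebra.ι k x * a + τ (TensorAlgebra.ι k x) a))) =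
        TensorAlgebra.ι k x * K (L (tensorAlgebraComul k g a)) := by
    rw [map_add, map_mul, tensorAlgebraComul_ι,
      tensorAlgebraComul_map_of_leibniz (hτder x) (hτι_mem x),
      pairing_primitive_mul_add hτder hK hL, hK]
  refine LinearMap.congr_fun (TensorAlgebra.linearMap_ext_of_ι_mul_add
    (f := fun x => τ (TensorAlgebra.ι k x)) (Φ := LinearMap.mulRight k (K B) ∘ₗ K)
    (Ψ := K ∘ₗ L ∘ₗ (tensorAlgebraComul k g).toLinearMap)
    (fun x n a ha => map_mem_pow_of_leibniz (hτder x) ?_ ha) ?_ hΨ ?_) A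
  · rintro _ ⟨y, rfl⟩
    exact hτι_mem x y
  · intro x a
    simp [hK, mul_assoc]
  · simp [Algebra.TensorProduct.one_def, hL, hK1]
end

section
/- With notation as in the cocycle identity, defining the action a · b = τ(a)b of T(𝔤) on itself, the inverse K-operator satisfies K^{−1}(a ⊗ b) = Σ_{(a)} K^{−1}(a_{(1)}) ⊗ (a_{(2)} · K^{−1}(b)) for all a, b ∈ T(𝔤); i.e., K^{−1} is a cocycle for this action. -/
/-!
Write `L = K⁻¹` and `Φ(a) = Σ_{(a)} L(a₍₁₎) · τ(a₍₂₎)(L b)`. The defining relation of `K` says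
`L(x a) = x L(a) + τ_x L(a)`, and since `Δ(x a) = (1 ⊗ x + x ⊗ 1) Δ(a)` and `τ_x` is a
derivation, `Φ` obeys the same recursion: `Φ(x a) = x Φ(a) + τ_x Φ(a)`. Applying `K` gives
`K Φ(x a) = x K Φ(a)`, and `K Φ(1) = K L(b) = b`, so `K Φ(a) = a b` because `T(𝔤)` is spanned by
the words `x₁ ⋯ xₙ · 1`.
-/

open TensorProduct

/-!
Write `L = K⁻¹` and `Φ(a) = Σ_{(a)} L(a₍₁₎) · τ(a₍₂₎)(L b)`. The defining relation of `K` says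
`L(x a) = x L(a) + τ_x L(a)`, and since `Δ(x a) = (1 ⊗ x + x ⊗ 1) Δ(a)` and `τ_x` is a
derivation, `Φ` obeys the same recursion: `Φ(x a) = x Φ(a) + τ_x Φ(a)`. Applying `K` gives
`K Φ(x a) = x K Φ(a)`, and `K Φ(1) = K L(b) = b`, so `K Φ(a) = a b` because `T(𝔤)` is spanned by
the words `x₁ ⋯ xₙ · 1`.
-/

namespace TensorAlgebra

theorem linearMap_ext_of_ι_mul {R M N : Type*} [CommSemiring R] [AddCommMonoid M] [Module R M]
    [AddCommMonoid N] [Module R N] {f g : TensorAlgebra R M →ₗ[R] N} (h1 : f 1 = g 1)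
    (hι : ∀ (x : M) (a : TensorAlgebra R M), f a = g a → f (ι R x * a) = g (ι R x * a)) :
    f = g := by
  suffices ∀ a c : TensorAlgebra R M, f c = g c → f (a * c) = g (a * c) by
    ext a; simpa using this a 1 h1
  intro a
  induction a using TensorAlgebra.induction with
  | algebraMap r => intro c hc; simp [Algebra.algebraMap_eq_smul_one, hc]
  | ι x => exact hι x
  | mul a₁ a₂ ih₁ ih₂ => intro c hc; rw [mul_assoc]; exact ih₁ _ (ih₂ c hc)
  | add a₁ a₂ ih₁ ih₂ => intro c hc; simp only [add_mul, map_add, ih₁ c hc, ih₂ c hc]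

end TensorAlgebra

theorem tensorAlgebraComul_ι_s11 (k : Type*) [Field k] {V : Type*} [AddCommGroup V] [Module k V]
    (x : V) :
    tensorAlgebraComul k V (TensorAlgebra.ι k x) =
      1 ⊗ₜ TensorAlgebra.ι k x + TensorAlgebra.ι k x ⊗ₜ 1 := by
  simp [tensorAlgebraComul]

section Cocycle

variable {R V : Type*} [CommRing R] [AddCommGroup V] [Module R V]
  (τ : TensorAlgebra R V →ₐ[R] Module.End R (TensorAlgebra R V))

/-- `lift (cocycleForm τ φ u) (Δ a) = Σ_{(a)} φ(a₍₁₎) · (a₍₂₎ · u)`. -/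
def cocycleForm (φ : TensorAlgebra R V →ₗ[R] TensorAlgebra R V) (u : TensorAlgebra R V) :
    TensorAlgebra R V →ₗ[R] TensorAlgebra R V →ₗ[R] TensorAlgebra R V :=
  (LinearMap.mul R _).compl₁₂ φ ((LinearMap.applyₗ u).comp τ.toLinearMap)

@[simp]
theorem cocycleForm_apply (φ : TensorAlgebra R V →ₗ[R] TensorAlgebra R V)
    (u c e : TensorAlgebra R V) : cocycleForm τ φ u c e = φ c * τ e u :=
  rfl

variable {τ}

theorem inverse_ι_mul_of_kOperator {K L : TensorAlgebra R V →ₗ[R] TensorAlgebra R V}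
    (hK : ∀ (x : V) (a : TensorAlgebra R V),
      K (TensorAlgebra.ι R x * a + τ (TensorAlgebra.ι R x) a) = TensorAlgebra.ι R x * K a)
    (hLK : ∀ a, L (K a) = a) (hKL : ∀ a, K (L a) = a) (x : V) (a : TensorAlgebra R V) :
    L (TensorAlgebra.ι R x * a) = TensorAlgebra.ι R x * L a + τ (TensorAlgebra.ι R x) (L a) := by
  conv_lhs => rw [← hKL a, ← hK, hLK]

theorem lift_cocycleForm_mul
    (hτder : ∀ (x : V) (a b : TensorAlgebra R V),
      τ (TensorAlgebra.ι R x) (a * b) =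
        τ (TensorAlgebra.ι R x) a * b + a * τ (TensorAlgebra.ι R x) b)
    {φ : TensorAlgebra R V →ₗ[R] TensorAlgebra R V}
    (hφ : ∀ (x : V) (a : TensorAlgebra R V),
      φ (TensorAlgebra.ι R x * a) = TensorAlgebra.ι R x * φ a + τ (TensorAlgebra.ι R x) (φ a))
    (u : TensorAlgebra R V) (x : V) (t : TensorAlgebra R V ⊗[R] TensorAlgebra R V) :
    lift (cocycleForm τ φ u) ((1 ⊗ₜ TensorAlgebra.ι R x + TensorAlgebra.ι R x ⊗ₜ 1) * t) =
      TensorAlgebra.ι R x * lift (cocycleForm τ φ u) t +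
        τ (TensorAlgebra.ι R x) (lift (cocycleForm τ φ u) t) := by
  induction t using TensorProduct.induction_on with
  | zero => simp
  | tmul c e =>
    simp only [add_mul, Algebra.TensorProduct.tmul_mul_tmul, one_mul, map_add, lift.tmul,
      cocycleForm_apply, map_mul, Module.End.mul_apply, hφ, hτder]
    noncomm_ring
  | add t₁ t₂ ih₁ ih₂ =>
    simp only [mul_add, map_add, ih₁, ih₂]
    abel

end Cocycle

theorem kOperator_comp_lift_cocycleForm_comp_comul {k g : Type*} [Field k] [AddCommGroup g]
    [Module k g] {τ : TensorAlgebra k g →ₐ[k] Module.End k (TensorAlgebra k g)}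
    (hτder : ∀ (x : g) (a b : TensorAlgebra k g),
      τ (TensorAlgebra.ι k x) (a * b) =
        τ (TensorAlgebra.ι k x) a * b + a * τ (TensorAlgebra.ι k x) b)
    {K L : TensorAlgebra k g →ₗ[k] TensorAlgebra k g}
    (hK : ∀ (x : g) (a : TensorAlgebra k g),
      K (TensorAlgebra.ι k x * a + τ (TensorAlgebra.ι k x) a) = TensorAlgebra.ι k x * K a)
    (hL1 : L 1 = 1) (hLK : ∀ a, L (K a) = a) (hKL : ∀ a, K (L a) = a) (b : TensorAlgebra k g) :
    K ∘ₗ lift (cocycleForm τ L (L b)) ∘ₗ (tensorAlgebraComul k g).toLinearMap =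
      LinearMap.mulRight k b := by
  refine TensorAlgebra.linearMap_ext_of_ι_mul ?_ fun x a ih => ?_
  · simp [Algebra.TensorProduct.one_def, hL1, hKL]
  · simp only [LinearMap.comp_apply, AlgHom.toLinearMap_apply, LinearMap.mulRight_apply,
      map_mul, tensorAlgebraComul_ι_s11] at ih ⊢
    rw [lift_cocycleForm_mul hτder (inverse_ι_mul_of_kOperator hK hLK hKL), hK, ih, mul_assoc]

/-- The inverse K-operator is a cocycle: defining the action `a · b = τ(a)b` of `T(𝔤)` on
itself, the inverse `L = K⁻¹` of the K-operator satisfies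
`K⁻¹(a ⊗ b) = Σ_{(a)} K⁻¹(a₍₁₎) ⊗ (a₍₂₎ · K⁻¹(b))` for all `a, b ∈ T(𝔤)`. -/
theorem kOperator_inverse_is_cocycle
    (k : Type*) [Field k] (g : Type*) [AddCommGroup g] [Module k g]
    (τ : TensorAlgebra k g →ₐ[k] Module.End k (TensorAlgebra k g))
    (hτder : ∀ (x : g) (a b : TensorAlgebra k g),
      τ (TensorAlgebra.ι k x) (a * b) =
        τ (TensorAlgebra.ι k x) a * b + a * τ (TensorAlgebra.ι k x) b)
    (K L : TensorAlgebra k g →ₗ[k] TensorAlgebra k g)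
    (hK1 : K 1 = 1)
    (hK : ∀ (x : g) (a : TensorAlgebra k g),
      K (TensorAlgebra.ι k x * a + τ (TensorAlgebra.ι k x) a) =
        TensorAlgebra.ι k x * K a)
    (hLK : ∀ a, L (K a) = a) (hKL : ∀ a, K (L a) = a)
    (a b : TensorAlgebra k g) :
    L (a * b) =
      (TensorProduct.lift
          (LinearMap.mk₂ k (fun c e => L c * τ e (L b))
            (fun c c' e => by simp [map_add, add_mul])
            (fun s c e => by simp [map_smul, smul_mul_assoc])
            (fun c e e' => by simp [map_add, mul_add])
            (fun s c e => by simp [map_smul, mul_smul_comm])))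
        (tensorAlgebraComul k g a) := by
  have hL1 : L 1 = 1 := by simpa [hK1] using hLK 1
  have hKΦ : K (lift (cocycleForm τ L (L b)) (tensorAlgebraComul k g a)) = a * b :=
    LinearMap.congr_fun (kOperator_comp_lift_cocycleForm_comp_comul hτder hK hL1 hLK hKL b) a
  rw [← hKΦ, hLK]
  rfl
end
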